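/- For every 2-limited word u there exists a compact word w such that the identity u ≈ w is a consequence of {σμ, y x x t y ≈ x x y t y}^δ, where σμ is x t1 x y t2 y ≈ x t1 y x t2 y. -/

import Mathlib

/-- Words over a countably infinite alphabet of variables (identified with ℕ). -/
abbrev Wd := List ℕ

/-- Evaluation of a word in a monoid under an assignment of the variables. -/
def evalWord {M : Type*} [Monoid M] (φ : ℕ → M) (u : Wd) : M := (u.map φ).prod

/-- A monoid `M` satisfies the identity `e = (u, v)`. -/
def Sat (M : Type*) [Monoid M] (e : Wd × Wd) : Prop :=
  ∀ φ : ℕ → M, evalWord φ e.1 = evalWord φ e.2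

/-- The identity `e` is a consequence of the set of identities `Γ`:
every monoid satisfying all identities of `Γ` satisfies `e`. -/
def Consequence (Γ : Set (Wd × Wd)) (e : Wd × Wd) : Prop :=
  ∀ (M : Type) [Monoid M], (∀ f ∈ Γ, Sat M f) → Sat M e

/-- The content of a word: the set of variables occurring in it. -/
def conW (u : Wd) : Set ℕ := {x | x ∈ u}

/-- The set of linear (exactly once occurring) variables of a word. -/
def linW (u : Wd) : Set ℕ := {x | u.count x = 1}

/-- The set of non-linear (more than once occurring) variables of a word. -/
def nonW (u : Wd) : Set ℕ := {x | 2 ≤ u.count x}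

/-- `restrict u X` is the word obtained from `u` by deleting all occurrences of
all variables not in `X`. -/
noncomputable def restrict (u : Wd) (X : Set ℕ) : Wd :=
  u.filter (fun a => @decide (a ∈ X) (Classical.propDecidable _))

/-- The closure of a set of identities under deleting variables. -/
def delta (Γ : Set (Wd × Wd)) : Set (Wd × Wd) :=
  {e | ∃ f ∈ Γ, ∃ X : Set ℕ, e = (restrict f.1 X, restrict f.2 X)}

/-- A word is almost-linear if it has at most one non-linear variable. -/
def AlmostLinearW (u : Wd) : Prop := ∀ x y, 2 ≤ u.count x → 2 ≤ u.count y → x = y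

/-- An identity is almost-linear if both of its sides are almost-linear words. -/
def AlmostLinearId (e : Wd × Wd) : Prop := AlmostLinearW e.1 ∧ AlmostLinearW e.2

/-- An identity is regular if both sides have the same content. -/
def RegularId (e : Wd × Wd) : Prop := conW e.1 = conW e.2

/-- A word `u` is an isoterm for a monoid `M` if the only word `v` with
`M ⊨ u ≈ v` is `u` itself. -/
def Isoterm (M : Type*) [Monoid M] (u : Wd) : Prop := ∀ v : Wd, Sat M (u, v) → v = u

/-- An identity `u ≈ v` is block-balanced if `u(x, lin u) = v(x, lin u)`
for every variable `x`. -/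
def BlockBalanced (e : Wd × Wd) : Prop :=
  ∀ x : ℕ, restrict e.1 ({x} ∪ linW e.1) = restrict e.2 ({x} ∪ linW e.1)

/-- A monoid is finitely based: some finite set of its identities implies all of them. -/
def FinitelyBased (S : Type*) [Monoid S] : Prop :=
  ∃ Γ : Set (Wd × Wd), Γ.Finite ∧ (∀ e ∈ Γ, Sat S e) ∧
    ∀ e : Wd × Wd, Sat S e → Consequence Γ e

/-- Index of the first occurrence of a variable in a word. -/
def firstIdx (u : Wd) (x : ℕ) : ℕ := u.idxOf x

/-- Index of the last occurrence of a variable in a word. -/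
def lastIdx (u : Wd) (x : ℕ) : ℕ := u.length - 1 - u.reverse.idxOf x

/-- σ1 : x y t1 x t2 y ≈ y x t1 x t2 y, with x=0, y=1, t1=2, t2=3. -/
def sigma1 : Wd × Wd := ([0,1,2,0,3,1], [1,0,2,0,3,1])

/-- σμ : x t1 x y t2 y ≈ x t1 y x t2 y, with x=0, y=1, t1=2, t2=3. -/
def sigmaMu : Wd × Wd := ([0,2,0,1,3,1], [0,2,1,0,3,1])

/-- σ2 : x t1 y t2 x y ≈ x t1 y t2 y x, with x=0, y=1, t1=2, t2=3. -/
def sigma2 : Wd × Wd := ([0,2,1,3,0,1], [0,2,1,3,1,0])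

/-- A word is compact: for every non-linear variable `x`, if two occurrences of
`x` have no linear variable between them, then every letter between them is `x`. -/
def CompactW (u : Wd) : Prop :=
  ∀ x : ℕ, 2 ≤ u.count x →
    ∀ i j : ℕ, i < j → j < u.length → u.getD i 0 = x → u.getD j 0 = x →
      (∀ k, i < k → k < j → u.getD k 0 ∉ linW u) →
      ∀ k, i < k → k < j → u.getD k 0 = x


/-!
Read σμ as the rule `o c ↦ c o` (`c` occurs earlier, `o` later) and `y x x t y ≈ x x y t y` as
`o c c ↦ c c o` (`o` occurs later). On 2-limited words both rules strictly decrease the total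
distance between equal letters, so rewriting terminates. A word without a redex is compact: in a
shortest segment `x m x` witnessing non-compactness, the first letter `c` of `m` that does not
reappear after the segment forms a redex with its left neighbour, since the other occurrence of
`c` lies before the segment or (by minimality) right after `c`.
-/
lemma List.exists_eq_append_cons_of_exists_not {α : Type*} {p : α → Prop} :
    ∀ {l : List α}, (∃ a ∈ l, ¬ p a) →
      ∃ l₁ a l₂, l = l₁ ++ a :: l₂ ∧ (∀ b ∈ l₁, p b) ∧ ¬ p a
  | [], ⟨_, ha, _⟩ => absurd ha List.not_mem_nil
  | b :: l, ⟨a, ha, hpa⟩ => by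
    by_cases hb : p b
    · have hl : ∃ a ∈ l, ¬ p a := by
        rcases List.mem_cons.1 ha with rfl | ha
        · exact absurd hb hpa
        · exact ⟨a, ha, hpa⟩
      obtain ⟨l₁, a', l₂, rfl, h₁, h₂⟩ := List.exists_eq_append_cons_of_exists_not hl
      exact ⟨b :: l₁, a', l₂, rfl, by simpa [hb] using h₁, h₂⟩
    · exact ⟨[], b, l, rfl, by simp, hb⟩

lemma List.eq_take_append_cons_drop_take_append_cons_drop {α : Type*} (l : List α) {i j : ℕ}
    (hij : i < j) (hj : j < l.length) :
    l = l.take i ++ l[i] :: ((l.take j).drop (i + 1) ++ l[j] :: l.drop (j + 1)) := by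
  have hpre : l.take j = l.take i ++ l[i] :: (l.take j).drop (i + 1) := by
    conv_lhs => rw [← List.take_append_drop (i + 1) (l.take j)]
    rw [List.take_take, Nat.min_eq_left (by omega), List.take_succ_eq_append_getElem (by omega),
      List.append_assoc, List.singleton_append]
  conv_lhs => rw [← List.take_append_drop j l, List.drop_eq_getElem_cons hj, hpre]
  simp

lemma evalWord_append {M : Type*} [Monoid M] (φ : ℕ → M) (u v : Wd) :
    evalWord φ (u ++ v) = evalWord φ u * evalWord φ v := by
  simp [evalWord]

lemma evalWord_flatMap {M : Type*} [Monoid M] (φ : ℕ → M) (s : ℕ → Wd) (u : Wd) :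
    evalWord φ (u.flatMap s) = evalWord (fun n => evalWord φ (s n)) u := by
  induction u with
  | nil => rfl
  | cons a u ih => simp only [List.flatMap_cons, evalWord_append, ih]; simp [evalWord]

lemma Sat.append_flatMap_append {M : Type*} [Monoid M] {e : Wd × Wd} (h : Sat M e)
    (A B : Wd) (s : ℕ → Wd) : Sat M (A ++ e.1.flatMap s ++ B, A ++ e.2.flatMap s ++ B) := by
  intro φ
  simp only [evalWord_append, evalWord_flatMap, h _]

namespace Consequence

variable {Γ : Set (Wd × Wd)}

lemma refl (u : Wd) : Consequence Γ (u, u) := fun _ _ _ _ => rfl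

lemma symm {u v : Wd} (h : Consequence Γ (u, v)) : Consequence Γ (v, u) :=
  fun M _ hM φ => (h M hM φ).symm

lemma trans {u v w : Wd} (h₁ : Consequence Γ (u, v)) (h₂ : Consequence Γ (v, w)) :
    Consequence Γ (u, w) :=
  fun M _ hM φ => (h₁ M hM φ).trans (h₂ M hM φ)

lemma append_flatMap_append {e : Wd × Wd} (he : e ∈ Γ) (A B : Wd) (s : ℕ → Wd) :
    Consequence Γ (A ++ e.1.flatMap s ++ B, A ++ e.2.flatMap s ++ B) :=
  fun _ _ hM => (hM e he).append_flatMap_append A B s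

end Consequence

lemma mem_delta {Γ : Set (Wd × Wd)} {e : Wd × Wd} (he : e ∈ Γ) : e ∈ delta Γ :=
  ⟨e, he, Set.univ, by simp [restrict]⟩

section Swaps

variable {Γ : Set (Wd × Wd)} {P Q : Wd} {o c : ℕ}

lemma consequence_swap_of_sigmaMu_mem (h : sigmaMu ∈ Γ) (hc : c ∈ P) (ho : o ∈ Q) :
    Consequence Γ (P ++ o :: c :: Q, P ++ c :: o :: Q) := by
  obtain ⟨P₁, P₂, rfl⟩ := List.append_of_mem hc
  obtain ⟨Q₁, Q₂, rfl⟩ := List.append_of_mem ho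
  simpa [sigmaMu] using
    (Consequence.append_flatMap_append h P₁ Q₂ fun n => [[c], [o], P₂, Q₁].getD n []).symm

lemma consequence_swap_of_yxxty_mem (h : (([1,0,0,2,1], [0,0,1,2,1]) : Wd × Wd) ∈ Γ)
    (ho : o ∈ Q) : Consequence Γ (P ++ o :: c :: c :: Q, P ++ c :: c :: o :: Q) := by
  obtain ⟨Q₁, Q₂, rfl⟩ := List.append_of_mem ho
  simpa using Consequence.append_flatMap_append h P Q₂ fun n => [[c], [o], Q₁].getD n []

end Swaps

-- `weightedCount a t = ∑ (k + 1)` over the positions `k` of `a` in `t`, so `spread u` is the sum of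
-- `j - i` over all pairs of positions `i < j` carrying the same letter.
def weightedCount (a : ℕ) : Wd → ℕ
  | [] => 0
  | b :: t => (b :: t).count a + weightedCount a t

def spread : Wd → ℕ
  | [] => 0
  | a :: t => weightedCount a t + spread t

lemma weightedCount_swap (d : ℕ) (P Q : Wd) (a b : ℕ) :
    weightedCount d (P ++ b :: a :: Q) + (if d = b then 1 else 0) =
      weightedCount d (P ++ a :: b :: Q) + (if d = a then 1 else 0) := by
  induction P with
  | nil =>
    simp only [weightedCount, List.nil_append, List.count_cons, beq_iff_eq]
    split_ifs <;> omega
  | cons e P ih =>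
    simp only [weightedCount, List.cons_append, List.count_cons, List.count_append] at *
    omega

lemma spread_swap (P Q : Wd) {a b : ℕ} (hab : a ≠ b) :
    spread (P ++ b :: a :: Q) + P.count b + Q.count a =
      spread (P ++ a :: b :: Q) + P.count a + Q.count b := by
  induction P with
  | nil => simp [spread, weightedCount, hab, hab.symm]; omega
  | cons d P ih =>
    have := weightedCount_swap d P Q a b
    simp only [spread, List.cons_append, List.count_cons, beq_iff_eq] at *
    omega

section TwoLimited

variable {P Q : Wd} {o c : ℕ}

lemma spread_lt_of_swap (hlim : ∀ z, (P ++ o :: c :: Q).count z ≤ 2) (hc : c ∈ P) (ho : o ∈ Q) :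
    spread (P ++ c :: o :: Q) < spread (P ++ o :: c :: Q) := by
  have hcP := List.count_pos_iff.2 hc
  have hoQ := List.count_pos_iff.2 ho
  have hlo := hlim o
  have hlc := hlim c
  have hoc : o ≠ c := by
    rintro rfl
    simp only [List.count_append, List.count_cons_self] at hlo
    omega
  have := spread_swap P Q hoc.symm
  simp only [List.count_append, List.count_cons, beq_iff_eq, hoc, hoc.symm, if_true,
    if_false] at hlo hlc
  omega

lemma spread_lt_of_swap_sq (hlim : ∀ z, (P ++ o :: c :: c :: Q).count z ≤ 2) (ho : o ∈ Q) :
    spread (P ++ c :: c :: o :: Q) < spread (P ++ o :: c :: c :: Q) := by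
  have hoQ := List.count_pos_iff.2 ho
  have hlo := hlim o
  have hlc := hlim c
  have hoc : o ≠ c := by
    rintro rfl
    simp only [List.count_append, List.count_cons_self] at hlo
    omega
  have h₁ := spread_swap P (c :: Q) hoc.symm
  have h₂ := spread_swap (P ++ [c]) Q hoc.symm
  simp only [List.append_assoc, List.singleton_append] at h₂
  simp only [List.count_append, List.count_cons, List.count_nil, beq_iff_eq, hoc, hoc.symm,
    if_true, if_false] at hlo hlc h₁ h₂
  omega

end TwoLimited

def Reducible (u : Wd) : Prop :=
  (∃ P o c Q, u = P ++ o :: c :: Q ∧ c ∈ P ∧ o ∈ Q) ∨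
    ∃ P o c Q, u = P ++ o :: c :: c :: Q ∧ o ∈ Q

lemma Reducible.exists_step {Γ : Set (Wd × Wd)} {u : Wd} (h : Reducible u)
    (hσ : sigmaMu ∈ Γ) (hB : (([1,0,0,2,1], [0,0,1,2,1]) : Wd × Wd) ∈ Γ)
    (hlim : ∀ z, u.count z ≤ 2) :
    ∃ v, Consequence Γ (u, v) ∧ spread v < spread u ∧ v.Perm u := by
  rcases h with ⟨P, o, c, Q, rfl, hc, ho⟩ | ⟨P, o, c, Q, rfl, ho⟩
  · exact ⟨_, consequence_swap_of_sigmaMu_mem hσ hc ho, spread_lt_of_swap hlim hc ho,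
      .append_left P (.swap ..)⟩
  · exact ⟨_, consequence_swap_of_yxxty_mem hB ho, spread_lt_of_swap_sq hlim ho,
      .append_left P (List.perm_middle (l₁ := [c, c]))⟩

lemma reducible_of_segment_of_forall_mem {u p m q : Wd} {x : ℕ}
    (hu : u = p ++ x :: (m ++ x :: q)) (hm : m ≠ []) (hall : ∀ z ∈ m, z ∈ q) : Reducible u := by
  obtain ⟨m₀, o, rfl⟩ : ∃ m₀ o, m = m₀ ++ [o] :=
    ⟨_, _, (List.dropLast_append_getLast hm).symm⟩
  exact .inl ⟨p ++ x :: m₀, o, x, q, by simp [hu], by simp, hall o (by simp)⟩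

lemma reducible_of_segment {u : Wd} (hlim : ∀ z, u.count z ≤ 2) {p m q : Wd} {x : ℕ}
    (hu : u = p ++ x :: (m ++ x :: q)) (hm : m ≠ []) (hnl : ∀ z ∈ m, u.count z ≠ 1) :
    Reducible u := by
  induction hlen : m.length using Nat.strong_induction_on generalizing p m q x with
  | _ n ih =>
  by_cases hall : ∀ z ∈ m, z ∈ q
  · exact reducible_of_segment_of_forall_mem hu hm hall
  push Not at hall
  obtain ⟨m₁, c, t, rfl, hm₁, hcq⟩ := List.exists_eq_append_cons_of_exists_not hall
  obtain ⟨L, o, hL⟩ : ∃ L o, x :: m₁ = L ++ [o] :=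
    ⟨_, _, (List.dropLast_append_getLast (List.cons_ne_nil x m₁)).symm⟩
  have ho : o ∈ x :: m₁ := by simp [hL]
  have hu' : u = (p ++ L) ++ o :: c :: (t ++ x :: q) := by
    rw [hu, show x :: (m₁ ++ c :: t ++ x :: q) = (x :: m₁) ++ c :: (t ++ x :: q) by simp, hL]
    simp
  have hoS : o ∈ t ++ x :: q := by
    rcases List.mem_cons.1 ho with rfl | ho
    · simp
    · simp [hm₁ o ho]
  by_cases hcp : c ∈ p
  · exact .inl ⟨p ++ L, o, c, t ++ x :: q, hu', by simp [hcp], by simpa using hoS⟩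
  have hcx : c ≠ x := by
    rintro rfl
    have := hlim c
    simp only [hu, List.count_append, List.count_cons_self] at this
    omega
  have hcm₁ : c ∉ x :: m₁ := by
    simpa [hcx] using fun h => hcq (hm₁ c h)
  have hct : c ∈ t := by
    by_contra hct
    have := hnl c (by simp)
    simp only [hu, List.count_append, List.count_cons, List.count_eq_zero.2 hcp,
      List.count_eq_zero.2 hct, List.count_eq_zero.2 hcq,
      List.count_eq_zero.2 fun h => hcm₁ (List.mem_cons_of_mem x h), beq_iff_eq] at this
    simp [hcx.symm] at this
  obtain ⟨s, t₂, rfl⟩ := List.append_of_mem hct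
  obtain rfl | hs := eq_or_ne s []
  · refine .inr ⟨p ++ L, o, c, t₂ ++ x :: q, by simpa using hu', ?_⟩
    have hoc : o ≠ c := fun h => hcm₁ (h ▸ ho)
    simpa [hoc] using hoS
  · refine ih s.length ?_ (p := p ++ x :: m₁) (x := c) (q := t₂ ++ x :: q) ?_ hs
      (fun z hz => hnl z (by simp [hz])) rfl
    · simp [← hlen]
      omega
    · simp [hu]

lemma exists_segment_of_not_compactW {u : Wd} (h : ¬ CompactW u) :
    ∃ p x m q, u = p ++ x :: (m ++ x :: q) ∧ m ≠ [] ∧ ∀ z ∈ m, u.count z ≠ 1 := by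
  simp only [CompactW, not_forall] at h
  obtain ⟨x, -, i, j, hij, hj, hi, hj', hnl, k, hik, hkj, -⟩ := h
  rw [List.getD_eq_getElem _ _ (by omega)] at hi
  rw [List.getD_eq_getElem _ _ hj] at hj'
  refine ⟨u.take i, x, (u.take j).drop (i + 1), u.drop (j + 1), ?_, ?_, ?_⟩
  · conv_lhs => rw [u.eq_take_append_cons_drop_take_append_cons_drop hij hj]
    rw [hi, hj']
  · rw [← List.length_pos_iff]
    simp only [List.length_drop, List.length_take]
    omega
  · intro z hz
    obtain ⟨l, hl, rfl⟩ := List.mem_iff_getElem.1 hz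
    simp only [List.length_drop, List.length_take] at hl
    have := hnl (i + 1 + l) (by omega) (by omega)
    rw [List.getD_eq_getElem _ _ (by omega)] at this
    simpa [linW] using this

lemma reducible_of_not_compactW {u : Wd} (hlim : ∀ z, u.count z ≤ 2) (h : ¬ CompactW u) :
    Reducible u :=
  let ⟨_, _, _, _, hu, hm, hnl⟩ := exists_segment_of_not_compactW h
  reducible_of_segment hlim hu hm hnl

theorem exists_compactW_consequence {Γ : Set (Wd × Wd)} (hσ : sigmaMu ∈ Γ)
    (hB : (([1,0,0,2,1], [0,0,1,2,1]) : Wd × Wd) ∈ Γ) (u : Wd) (hlim : ∀ z, u.count z ≤ 2) :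
    ∃ w, CompactW w ∧ Consequence Γ (u, w) := by
  by_cases hc : CompactW u
  · exact ⟨u, hc, .refl u⟩
  obtain ⟨v, huv, hlt, hperm⟩ := (reducible_of_not_compactW hlim hc).exists_step hσ hB hlim
  obtain ⟨w, hw, hvw⟩ := exists_compactW_consequence hσ hB v fun z => hperm.count_eq z ▸ hlim z
  exact ⟨w, hw, huv.trans hvw⟩
termination_by spread u

theorem stmt13 (u : Wd) (hlim : ∀ x, u.count x ≤ 2) :
    ∃ w : Wd, CompactW w ∧
      Consequence (delta {sigmaMu, ([1,0,0,2,1], [0,0,1,2,1])}) (u, w) :=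
  exists_compactW_consequence (mem_delta (by simp)) (mem_delta (by simp)) u hlim
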